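/- arXiv:2010.14460 — 3 statements merged into one kernel-verified Lean document; each statement's English description precedes it below -/
import Mathlib

section
/- Let H = {(y,z) ∈ {0,1}^k × {0,1}^k : y ≠ 1⃗} where 1⃗ is the all-ones k-mer. Then for any σ ∈ {0,1}^{(μ+1)k}, the full vector (N_{y,z}^σ)_{y,z ∈ {0,1}^k} of non-overlapping transition counts is determined by (i.e., is a function of) the triple (x_0^σ, x_μ^σ, (N_{y,z}^σ)_{(y,z) ∈ H}). Specifically, for z ≠ 1⃗: N_{1⃗,z}^σ = 1{x_μ^σ = z} − 1{x_0^σ = z} + Σ_{y' ≠ z} N_{z,y'}^σ − Σ_{y ≠ z, y ≠ 1⃗} N_{y,z}^σ, and N_{1⃗,1⃗}^σ = μ − Σ_{(y,z) ≠ (1⃗,1⃗)} N_{y,z}^σ. -/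
/-- The `j`-th consecutive non-overlapping `k`-mer block of the binary sequence `σ`. -/
def blockOf (k : ℕ) (σ : ℕ → Bool) (j : ℕ) : Fin k → Bool := fun i => σ (j * k + i)

/-- The number of non-overlapping transitions from `y` to `z` among the first `μ+1` blocks. -/
def Ntrans (k μ : ℕ) (σ : ℕ → Bool) (y z : Fin k → Bool) : ℕ :=
  ((Finset.range μ).filter (fun j => blockOf k σ j = y ∧ blockOf k σ (j + 1) = z)).card

/-- The all-ones `k`-mer. -/
def onesKmer (k : ℕ) : Fin k → Bool := fun _ => true

lemma Ntrans_cast (k μ : ℕ) (σ : ℕ → Bool) (y z : Fin k → Bool) :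
    (Ntrans k μ σ y z : ℤ) = ∑ j ∈ Finset.range μ,
      (if blockOf k σ j = y ∧ blockOf k σ (j+1) = z then (1:ℤ) else 0) := by
  rw [Ntrans, Finset.card_filter]
  push_cast
  simp

/-- Algebraic redundancy: the transition counts out of the all-ones `k`-mer are determined
by the counts indexed by `H = {(y,z) : y ≠ 1⃗}` together with the first and last blocks. -/
theorem redundant_transitions (k μ : ℕ) (hk : 0 < k) (hμ : 0 < μ) (σ : ℕ → Bool) :
    (∀ z : Fin k → Bool, z ≠ onesKmer k →
      (Ntrans k μ σ (onesKmer k) z : ℤ)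
        = (if blockOf k σ μ = z then 1 else 0) - (if blockOf k σ 0 = z then 1 else 0)
          + ∑ y' ∈ Finset.univ.filter (fun y' : Fin k → Bool => y' ≠ z),
              (Ntrans k μ σ z y' : ℤ)
          - ∑ y ∈ Finset.univ.filter
              (fun y : Fin k → Bool => y ≠ z ∧ y ≠ onesKmer k),
              (Ntrans k μ σ y z : ℤ))
    ∧ (Ntrans k μ σ (onesKmer k) (onesKmer k) : ℤ)
        = (μ : ℤ) - ∑ p ∈ (Finset.univ : Finset ((Fin k → Bool) × (Fin k → Bool))).filter
              (fun p => p ≠ (onesKmer k, onesKmer k)),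
            (Ntrans k μ σ p.1 p.2 : ℤ) := by
  constructor
  · intro z hz
    have htel : ∑ j ∈ Finset.range μ,
        ((if blockOf k σ (j+1) = z then (1:ℤ) else 0) - (if blockOf k σ j = z then (1:ℤ) else 0))
        = (if blockOf k σ μ = z then (1:ℤ) else 0) - (if blockOf k σ 0 = z then 1 else 0) :=
      Finset.sum_range_sub (fun j => if blockOf k σ j = z then (1:ℤ) else 0) μ
    rw [← htel]
    simp_rw [Ntrans_cast]
    rw [Finset.sum_comm (s := Finset.univ.filter (fun y' : Fin k → Bool => y' ≠ z)),
        Finset.sum_comm (s := Finset.univ.filter (fun y : Fin k → Bool => y ≠ z ∧ y ≠ onesKmer k)),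
        ← Finset.sum_add_distrib, ← Finset.sum_sub_distrib]
    refine Finset.sum_congr rfl fun j _ => ?_
    have h1 : ∑ y' ∈ Finset.univ.filter (fun y' : Fin k → Bool => y' ≠ z),
        (if blockOf k σ j = z ∧ blockOf k σ (j+1) = y' then (1:ℤ) else 0)
        = if blockOf k σ j = z then (if blockOf k σ (j+1) = z then 0 else (1:ℤ)) else 0 := by
      by_cases hbj : blockOf k σ j = z
      · simp only [hbj, true_and, if_true]
        rw [Finset.sum_ite_eq (Finset.univ.filter (fun y' : Fin k → Bool => y' ≠ z))
          (blockOf k σ (j+1)) (fun _ => (1:ℤ))]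
        by_cases h2 : blockOf k σ (j+1) = z <;> simp [h2]
      · simp [hbj]
    have h2 : ∑ y ∈ Finset.univ.filter (fun y : Fin k → Bool => y ≠ z ∧ y ≠ onesKmer k),
        (if blockOf k σ j = y ∧ blockOf k σ (j+1) = z then (1:ℤ) else 0)
        = if blockOf k σ j ≠ z ∧ blockOf k σ j ≠ onesKmer k
            then (if blockOf k σ (j+1) = z then (1:ℤ) else 0) else 0 := by
      simp_rw [ite_and]
      rw [Finset.sum_ite_eq (Finset.univ.filter
          (fun y : Fin k → Bool => y ≠ z ∧ y ≠ onesKmer k))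
        (blockOf k σ j) (fun _ => if blockOf k σ (j+1) = z then (1:ℤ) else 0)]
      by_cases e1 : blockOf k σ j = z <;> by_cases e3 : blockOf k σ j = onesKmer k <;>
        simp [e1, e3]
    rw [h1, h2]
    by_cases e1 : blockOf k σ j = z <;> by_cases e2 : blockOf k σ (j+1) = z <;>
      by_cases e3 : blockOf k σ j = onesKmer k <;>
      simp_all
  · have htot : ∑ p : (Fin k → Bool) × (Fin k → Bool), (Ntrans k μ σ p.1 p.2 : ℤ) = μ := by
      simp_rw [Ntrans_cast]
      rw [Finset.sum_comm]
      have : ∀ j, ∑ p : (Fin k → Bool) × (Fin k → Bool),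
          (if blockOf k σ j = p.1 ∧ blockOf k σ (j+1) = p.2 then (1:ℤ) else 0) = 1 := by
        intro j
        have : ∀ p : (Fin k → Bool) × (Fin k → Bool),
            (if blockOf k σ j = p.1 ∧ blockOf k σ (j+1) = p.2 then (1:ℤ) else 0)
            = if (blockOf k σ j, blockOf k σ (j+1)) = p then (1:ℤ) else 0 := by
          intro p; congr 1; simp [Prod.ext_iff]
        simp_rw [this]
        rw [Finset.sum_ite_eq Finset.univ (blockOf k σ j, blockOf k σ (j+1)) (fun _ => (1:ℤ))]
        simp
      simp [this]
    have hsplit := Finset.add_sum_erase Finset.univ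
      (fun p : (Fin k → Bool) × (Fin k → Bool) => (Ntrans k μ σ p.1 p.2 : ℤ))
      (Finset.mem_univ (onesKmer k, onesKmer k))
    rw [Finset.filter_ne', htot] at *
    linarith [hsplit]
end

section
/- Let f be a probability mass function on ℤ^d with finite second moment, and suppose that for every coordinate r ∈ {1,...,d} there exists a point x_r ∈ ℤ^d with f(x_r) > 0 and f(x_r + e_r) > 0, where e_r is the r-th standard basis vector. Then the covariance matrix of f is positive definite. -/
/-!
For a weight `f ≥ 0` and vectors `Y x`, the matrix `∑' x, f x • Y x (Y x)ᵀ` has quadratic form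
`v ↦ ∑' x, f x * (v ⬝ᵥ Y x) ^ 2`, so it is positive definite as soon as no nonzero `v` is
orthogonal to every `Y x` with `f x > 0`. For the covariance matrix `Y x = x - m`, and if `x` and
`x + e_r` both carry mass then `v ⬝ᵥ (x + e_r - m) - v ⬝ᵥ (x - m) = v r`, so the two cannot both
vanish when `v r ≠ 0`.
-/

open Matrix

section SecondMoment

variable {α ι : Type*}

noncomputable def secondMomentMatrix (f : α → ℝ) (Y : α → ι → ℝ) : Matrix ι ι ℝ :=
  of fun i j => ∑' x, f x * Y x i * Y x j

theorem secondMomentMatrix_isHermitian (f : α → ℝ) (Y : α → ι → ℝ) :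
    (secondMomentMatrix f Y).IsHermitian := by
  ext i j
  simp only [secondMomentMatrix, conjTranspose_apply, of_apply, star_trivial]
  exact tsum_congr fun x => by ring

variable [Fintype ι]

theorem hasSum_sq_dotProduct_secondMomentMatrix {f : α → ℝ} {Y : α → ι → ℝ}
    (hY : ∀ i j, Summable fun x => f x * Y x i * Y x j) (v : ι → ℝ) :
    HasSum (fun x => f x * (v ⬝ᵥ Y x) ^ 2) (v ⬝ᵥ (secondMomentMatrix f Y *ᵥ v)) := by
  have hterm : ∀ x, f x * (v ⬝ᵥ Y x) ^ 2 = ∑ i, ∑ j, v i * (f x * Y x i * Y x j) * v j := by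
    intro x
    rw [dotProduct, sq, Finset.sum_mul_sum, Finset.mul_sum]
    refine Finset.sum_congr rfl fun i _ => ?_
    rw [Finset.mul_sum]
    exact Finset.sum_congr rfl fun j _ => by ring
  have hform : v ⬝ᵥ (secondMomentMatrix f Y *ᵥ v)
      = ∑ i, ∑ j, v i * (∑' x, f x * Y x i * Y x j) * v j := by
    simp only [dotProduct, mulVec, secondMomentMatrix, of_apply, Finset.mul_sum]
    exact Finset.sum_congr rfl fun i _ => Finset.sum_congr rfl fun j _ => by ring
  rw [funext hterm, hform]
  exact hasSum_sum fun i _ => hasSum_sum fun j _ => ((hY i j).hasSum.mul_left (v i)).mul_right (v j)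

theorem secondMomentMatrix_posDef {f : α → ℝ} {Y : α → ι → ℝ} (hf : ∀ x, 0 ≤ f x)
    (hY : ∀ i j, Summable fun x => f x * Y x i * Y x j)
    (hY_span : ∀ v : ι → ℝ, v ≠ 0 → ∃ x, 0 < f x ∧ v ⬝ᵥ Y x ≠ 0) :
    (secondMomentMatrix f Y).PosDef := by
  refine .of_dotProduct_mulVec_pos (secondMomentMatrix_isHermitian f Y) fun v hv => ?_
  obtain ⟨x, hfx, hvx⟩ := hY_span v hv
  have hsum := hasSum_sq_dotProduct_secondMomentMatrix hY v
  rw [star_trivial, ← hsum.tsum_eq]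
  exact hsum.summable.tsum_pos (fun y => mul_nonneg (hf y) (sq_nonneg _)) x
    (mul_pos hfx (by positivity))

end SecondMoment

theorem summable_mul_sub_mul_sub {α : Type*} {f g h : α → ℝ} (a b : ℝ) (hf : Summable f)
    (hg : Summable fun x => f x * g x) (hh : Summable fun x => f x * h x)
    (hgh : Summable fun x => f x * g x * h x) :
    Summable fun x => f x * (g x - a) * (h x - b) :=
  ((hgh.sub (hg.mul_right b)).sub ((hh.mul_right a).sub (hf.mul_right (a * b)))).congr
    fun x => by ring

section Lattice

variable {ι : Type*} [Fintype ι] [DecidableEq ι]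

theorem dotProduct_sub_add_single (v m : ι → ℝ) (x : ι → ℤ) (r : ι) :
    v ⬝ᵥ (fun i => ((x + Pi.single r 1 : ι → ℤ) i : ℝ) - m i)
      = v ⬝ᵥ (fun i => (x i : ℝ) - m i) + v r := by
  have hshift : (fun i => ((x + Pi.single r 1 : ι → ℤ) i : ℝ) - m i)
      = (fun i => (x i : ℝ) - m i) + Pi.single r 1 := by
    ext i
    simp only [Pi.add_apply, Int.cast_add, Pi.single_apply]
    split_ifs <;> push_cast <;> ring
  rw [hshift, dotProduct_add, dotProduct_single, mul_one]

theorem exists_pos_dotProduct_sub_ne_zero {f : (ι → ℤ) → ℝ} (m : ι → ℝ)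
    (hcoord : ∀ r, ∃ x : ι → ℤ, 0 < f x ∧ 0 < f (x + Pi.single r 1)) {v : ι → ℝ} (hv : v ≠ 0) :
    ∃ x, 0 < f x ∧ v ⬝ᵥ (fun i => (x i : ℝ) - m i) ≠ 0 := by
  obtain ⟨r, hr⟩ := Function.ne_iff.mp hv
  obtain ⟨x, hx, hxr⟩ := hcoord r
  by_cases hvx : v ⬝ᵥ (fun i => (x i : ℝ) - m i) = 0
  · refine ⟨x + Pi.single r 1, hxr, ?_⟩
    rw [dotProduct_sub_add_single, hvx, zero_add]
    exact hr
  · exact ⟨x, hx, hvx⟩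

end Lattice

/-- If a probability mass function `f` on `ℤ^d` with finite first and second moments gives,
for every coordinate `r`, positive mass to some point `x_r` and to `x_r + e_r`, then the
covariance matrix of `f` is positive definite. -/
theorem covariance_posDef (d : ℕ) (f : (Fin d → ℤ) → ℝ)
    (hf : ∀ x, 0 ≤ f x) (hsum : HasSum f 1)
    (hmom1 : ∀ i : Fin d, Summable (fun x : Fin d → ℤ => f x * (x i : ℝ)))
    (hmom2 : ∀ i j : Fin d, Summable (fun x : Fin d → ℤ => f x * (x i : ℝ) * (x j : ℝ)))
    (hcoord : ∀ r : Fin d, ∃ x : Fin d → ℤ, 0 < f x ∧ 0 < f (x + Pi.single r 1)) :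
    Matrix.PosDef (Matrix.of fun i j : Fin d =>
      ∑' x : Fin d → ℤ,
        f x * ((x i : ℝ) - ∑' y : Fin d → ℤ, f y * (y i : ℝ))
            * ((x j : ℝ) - ∑' y : Fin d → ℤ, f y * (y j : ℝ))) := by
  set m : Fin d → ℝ := fun i => ∑' y, f y * (y i : ℝ)
  show (secondMomentMatrix f fun x i => (x i : ℝ) - m i).PosDef
  exact secondMomentMatrix_posDef hf
    (fun i j => summable_mul_sub_mul_sub (m i) (m j) hsum.summable (hmom1 i) (hmom1 j) (hmom2 i j))
    (fun v hv => exists_pos_dotProduct_sub_ne_zero m hcoord hv)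
end

section
/- Let E be at most countable with probability measures ν₁, ν₂, and let Ẽ ⊆ E be an event with ν₁(Ẽ) ∧ ν₂(Ẽ) = c₁ > 0. If ν̃ᵢ denotes νᵢ conditioned on Ẽ, then Σ_{x ∈ E} min(ν₁(x), ν₂(x)) ≥ c₁ · Σ_{x ∈ Ẽ} min(ν̃₁(x), ν̃₂(x)). Consequently, ‖ν₁ − ν₂‖_TV ≤ 1 − c₁(1 − ‖ν̃₁ − ν̃₂‖_TV). -/
/-- The "1 − Σ min" form of the total variation distance between two probability mass
functions on a countable space. -/
noncomputable def tvPMF {E : Type*} (ν₁ ν₂ : E → ℝ) : ℝ :=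
  1 - ∑' x, min (ν₁ x) (ν₂ x)

/-- Conditioning bound: if `c₁ = ν₁(Ẽ) ∧ ν₂(Ẽ) > 0` and `ν̃ᵢ` denotes `νᵢ` conditioned on
`Ẽ`, then `Σ_x min(ν₁ x, ν₂ x) ≥ c₁ · Σ_{x∈Ẽ} min(ν̃₁ x, ν̃₂ x)`, and consequently
`‖ν₁ − ν₂‖_TV ≤ 1 − c₁(1 − ‖ν̃₁ − ν̃₂‖_TV)`. -/
theorem conditioning_min_sum_bound {E : Type*} [Countable E] (ν₁ ν₂ : E → ℝ) (Et : Set E)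
    (h₁ : ∀ x, 0 ≤ ν₁ x) (h₂ : ∀ x, 0 ≤ ν₂ x)
    (hs₁ : HasSum ν₁ 1) (hs₂ : HasSum ν₂ 1)
    (c₁ : ℝ)
    (hc₁ : c₁ = min (∑' x, Et.indicator ν₁ x) (∑' x, Et.indicator ν₂ x))
    (hpos : 0 < c₁)
    (tν₁ tν₂ : E → ℝ)
    (ht₁ : tν₁ = Et.indicator fun x => ν₁ x / ∑' y, Et.indicator ν₁ y)
    (ht₂ : tν₂ = Et.indicator fun x => ν₂ x / ∑' y, Et.indicator ν₂ y) :
    c₁ * (∑' x, min (tν₁ x) (tν₂ x)) ≤ ∑' x, min (ν₁ x) (ν₂ x)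
    ∧ tvPMF ν₁ ν₂ ≤ 1 - c₁ * (1 - tvPMF tν₁ tν₂) := by
  set s₁ := ∑' x, Et.indicator ν₁ x with hs₁def
  set s₂ := ∑' x, Et.indicator ν₂ x with hs₂def
  have hc₁s₁ : c₁ ≤ s₁ := hc₁ ▸ min_le_left _ _
  have hc₁s₂ : c₁ ≤ s₂ := hc₁ ▸ min_le_right _ _
  have hs₁pos : 0 < s₁ := lt_of_lt_of_le hpos hc₁s₁
  have hs₂pos : 0 < s₂ := lt_of_lt_of_le hpos hc₁s₂
  -- nonnegativity of conditioned measures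
  have ht₁nn : ∀ x, 0 ≤ tν₁ x := by
    intro x
    rw [ht₁]
    exact Set.indicator_nonneg (fun y _ => div_nonneg (h₁ y) hs₁pos.le) x
  have ht₂nn : ∀ x, 0 ≤ tν₂ x := by
    intro x
    rw [ht₂]
    exact Set.indicator_nonneg (fun y _ => div_nonneg (h₂ y) hs₂pos.le) x
  have ht₁le : ∀ x, tν₁ x ≤ ν₁ x / s₁ := by
    intro x
    rw [ht₁]
    exact Set.indicator_le_self' (fun y _ => div_nonneg (h₁ y) hs₁pos.le) x
  -- summabilities
  have hsummin : Summable fun x => min (ν₁ x) (ν₂ x) :=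
    Summable.of_nonneg_of_le (fun x => le_min (h₁ x) (h₂ x)) (fun x => min_le_left _ _)
      hs₁.summable
  have hsummint : Summable fun x => min (tν₁ x) (tν₂ x) := by
    refine Summable.of_nonneg_of_le (fun x => le_min (ht₁nn x) (ht₂nn x))
      (fun x => le_trans (min_le_left _ _) (ht₁le x)) ?_
    exact hs₁.summable.div_const s₁
  -- pointwise bound
  have hpt : ∀ x, c₁ * min (tν₁ x) (tν₂ x) ≤ min (ν₁ x) (ν₂ x) := by
    intro x
    by_cases hx : x ∈ Et
    · rw [ht₁, ht₂, Set.indicator_of_mem hx, Set.indicator_of_mem hx,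
        mul_min_of_nonneg _ _ hpos.le]
      apply min_le_min
      · rw [mul_div_assoc']
        exact div_le_of_le_mul₀ hs₁pos.le (h₁ x) (by nlinarith [h₁ x])
      · rw [mul_div_assoc']
        exact div_le_of_le_mul₀ hs₂pos.le (h₂ x) (by nlinarith [h₂ x])
    · rw [ht₁, ht₂, Set.indicator_of_notMem hx, Set.indicator_of_notMem hx]
      simpa using le_min (h₁ x) (h₂ x)
  have key : c₁ * (∑' x, min (tν₁ x) (tν₂ x)) ≤ ∑' x, min (ν₁ x) (ν₂ x) := by
    rw [← tsum_mul_left]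
    exact Summable.tsum_le_tsum hpt (hsummint.mul_left c₁) hsummin
  refine ⟨key, ?_⟩
  simp only [tvPMF]
  linarith
end
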